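/- Let μ₀ ∈ (0, 4) satisfy ψ(2 − μ₀/4) − ψ(2 − μ₀/2) = log 2 (ψ the digamma function). Then the function A(μ) = π² 2^{2−μ/2} Γ(2 − μ/2) / Γ(2 − μ/4)² is strictly decreasing on (0, μ₀) and strictly increasing on (μ₀, 4); in particular A attains its minimum on (0,4) at μ₀. -/

import Mathlib

/-- The digamma function `ψ = Γ'/Γ`. -/
noncomputable def digamma (x : ℝ) : ℝ := deriv Real.Gamma x / Real.Gamma x

/-- `A(μ) = π² 2^{2−μ/2} Γ(2−μ/2) / Γ(2−μ/4)²`. -/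
noncomputable def Aconst (μ : ℝ) : ℝ :=
  Real.pi ^ 2 * (2 : ℝ) ^ (2 - μ / 2) * Real.Gamma (2 - μ / 2) / Real.Gamma (2 - μ / 4) ^ 2

open Real Set Filter Finset

lemma Gamma_hasDerivAt {x : ℝ} (hx : 0 < x) :
    HasDerivAt Real.Gamma (digamma x * Real.Gamma x) x := by
  have hd : DifferentiableAt ℝ Real.Gamma x := by
    apply Real.differentiableAt_Gamma
    intro m
    have : (0:ℝ) ≤ m := m.cast_nonneg
    intro h; rw [h] at hx; linarith
  have hG : Real.Gamma x ≠ 0 := (Real.Gamma_pos_of_pos hx).ne'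
  have : digamma x * Real.Gamma x = deriv Real.Gamma x := by
    rw [digamma]; field_simp
  rw [this]
  exact hd.hasDerivAt

lemma logGamma_hasDerivAt {x : ℝ} (hx : 0 < x) :
    HasDerivAt (fun t => Real.log (Real.Gamma t)) (digamma x) x := by
  have hG : Real.Gamma x ≠ 0 := (Real.Gamma_pos_of_pos hx).ne'
  have := (Gamma_hasDerivAt hx).log hG
  simpa [mul_div_assoc, div_self hG] using this

lemma digamma_add_one {x : ℝ} (hx : 0 < x) :
    digamma (x + 1) = digamma x + 1 / x := by
  have h1 : HasDerivAt (fun t => Real.log (Real.Gamma (t + 1))) (digamma (x + 1)) x := by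
    have := (logGamma_hasDerivAt (by linarith : (0:ℝ) < x + 1)).comp x
      ((hasDerivAt_id x).add_const 1)
    simpa [Function.comp_def] using this
  have h2 : HasDerivAt (fun t => Real.log t + Real.log (Real.Gamma t))
      (1 / x + digamma x) x := by
    have h := (Real.hasDerivAt_log hx.ne').add (logGamma_hasDerivAt hx)
    rw [one_div]; exact h
  have hev : (fun t => Real.log t + Real.log (Real.Gamma t))
      =ᶠ[nhds x] (fun t => Real.log (Real.Gamma (t + 1))) := by
    filter_upwards [eventually_gt_nhds hx] with t ht
    rw [Real.Gamma_add_one ht.ne', Real.log_mul ht.ne' (Real.Gamma_pos_of_pos ht).ne']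
  have h2' : HasDerivAt (fun t => Real.log (Real.Gamma (t + 1))) (1 / x + digamma x) x :=
    h2.congr_of_eventuallyEq hev.symm
  have := h1.unique h2'
  linarith

lemma digamma_le_log {t : ℝ} (ht : 0 < t) : digamma t ≤ Real.log t := by
  have h := Real.convexOn_log_Gamma.le_slope_of_hasDerivAt (mem_Ioi.2 ht)
    (mem_Ioi.2 (by linarith : (0:ℝ) < t + 1)) (lt_add_one t) (logGamma_hasDerivAt ht)
  rw [slope_def_field] at h
  have hG : Real.Gamma t ≠ 0 := (Real.Gamma_pos_of_pos ht).ne'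
  simpa [Function.comp, Real.Gamma_add_one ht.ne', Real.log_mul ht.ne' hG] using h

lemma log_le_digamma {t : ℝ} (ht : 1 < t) : Real.log (t - 1) ≤ digamma t := by
  have h1 : (0:ℝ) < t - 1 := by linarith
  have h := Real.convexOn_log_Gamma.slope_le_of_hasDerivAt (mem_Ioi.2 h1)
    (mem_Ioi.2 (by linarith : (0:ℝ) < t)) (by linarith) (logGamma_hasDerivAt (by linarith))
  rw [slope_def_field] at h
  have hG : Real.Gamma (t-1) ≠ 0 := (Real.Gamma_pos_of_pos h1).ne'
  have hGt : Real.Gamma t = (t - 1) * Real.Gamma (t - 1) := by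
    have := Real.Gamma_add_one h1.ne'
    simpa using this
  simp only [Function.comp_apply] at h
  rw [hGt, Real.log_mul h1.ne' hG, show t - (t-1) = 1 by ring, div_one] at h
  simpa using h

lemma digamma_diff_eq {x y : ℝ} (hx : 0 < x) (hy : 0 < y) (N : ℕ) :
    digamma y - digamma x = (∑ m ∈ Finset.range N, (1 / (x + m) - 1 / (y + m)))
      + (digamma (y + N) - digamma (x + N)) := by
  induction N with
  | zero => simp
  | succ n ih =>
    have hxn : (0:ℝ) < x + n := by positivity
    have hyn : (0:ℝ) < y + n := by positivity
    have ex : digamma (x + (n+1 : ℕ)) = digamma (x + n) + 1 / (x + n) := by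
      push_cast
      rw [show x + (n + 1 : ℝ) = (x + n) + 1 by ring, digamma_add_one hxn]
    have ey : digamma (y + (n+1 : ℕ)) = digamma (y + n) + 1 / (y + n) := by
      push_cast
      rw [show y + (n + 1 : ℝ) = (y + n) + 1 by ring, digamma_add_one hyn]
    rw [Finset.sum_range_succ, ex, ey]
    push_cast
    push_cast at ih
    linarith

lemma log_diff_tendsto (a b : ℝ) :
    Tendsto (fun n : ℕ => Real.log (a + n) - Real.log (b + n)) atTop (nhds 0) := by
  have h1 : Tendsto (fun n : ℕ => (a - b) / (b + n)) atTop (nhds 0) := by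
    apply Tendsto.div_atTop (tendsto_const_nhds)
    exact tendsto_atTop_add_const_left _ b tendsto_natCast_atTop_atTop
  have h2 : Tendsto (fun n : ℕ => (a + n) / (b + n)) atTop (nhds 1) := by
    have : Tendsto (fun n : ℕ => 1 + (a - b) / (b + n)) atTop (nhds (1 + 0)) :=
      tendsto_const_nhds.add h1
    rw [add_zero] at this
    apply this.congr'
    filter_upwards [(tendsto_atTop_add_const_left _ b
      tendsto_natCast_atTop_atTop).eventually_gt_atTop 0] with n hn
    field_simp
    ring
  have h3 : Tendsto (fun n : ℕ => Real.log ((a + n) / (b + n))) atTop (nhds 0) := by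
    have := (Real.continuousAt_log one_ne_zero).tendsto.comp h2
    simpa [Function.comp_def] using this
  apply h3.congr'
  filter_upwards [(tendsto_atTop_add_const_left _ b
      tendsto_natCast_atTop_atTop).eventually_gt_atTop 0,
    (tendsto_atTop_add_const_left _ a
      tendsto_natCast_atTop_atTop).eventually_gt_atTop 0] with n hb ha
  rw [Real.log_div ha.ne' hb.ne']

lemma digamma_tail_tendsto {x y : ℝ} (hx : 0 < x) (hy : 0 < y) :
    Tendsto (fun N : ℕ => digamma (y + N) - digamma (x + N)) atTop (nhds 0) := by
  refine tendsto_of_tendsto_of_tendsto_of_le_of_le' (log_diff_tendsto (y-1) x)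
    (log_diff_tendsto y (x-1)) ?_ ?_
  · filter_upwards [eventually_ge_atTop 2] with n hn
    have hn2 : (2:ℝ) ≤ n := by exact_mod_cast hn
    have h1 : (1:ℝ) < y + n := by linarith
    have h2 : (0:ℝ) < x + n := by linarith
    gcongr ?_ - ?_
    · have := log_le_digamma h1
      simpa [show y + (n:ℝ) - 1 = (y-1) + n by ring] using this
    · exact digamma_le_log h2
  · filter_upwards [eventually_ge_atTop 2] with n hn
    have hn2 : (2:ℝ) ≤ n := by exact_mod_cast hn
    have h1 : (1:ℝ) < x + n := by linarith
    have h2 : (0:ℝ) < y + n := by linarith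
    gcongr ?_ - ?_
    · exact digamma_le_log h2
    · have := log_le_digamma h1
      simpa [show x + (n:ℝ) - 1 = (x-1) + n by ring] using this

lemma digamma_diff_tendsto {x y : ℝ} (hx : 0 < x) (hy : 0 < y) :
    Tendsto (fun N : ℕ => ∑ m ∈ Finset.range N, (1 / (x + m) - 1 / (y + m)))
      atTop (nhds (digamma y - digamma x)) := by
  have h := (tendsto_const_nhds (x := digamma y - digamma x) (f := atTop (α := ℕ))).sub
    (digamma_tail_tendsto hx hy)
  rw [sub_zero] at h
  apply h.congr
  intro N
  have := digamma_diff_eq hx hy N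
  linarith


lemma one_div_sub_one_div {x y : ℝ} (hx : 0 < x) (hy : 0 < y) :
    1 / x - 1 / y = (y - x) / (x * y) := by
  field_simp

lemma term_le {a b : ℝ} (m : ℕ) (ha : 0 < a) (hb : b < 4) (hab : a < b) :
    1 / ((2 - a/2) + m) - 1 / ((2 - a/4) + m) < 1 / ((2 - b/2) + m) - 1 / ((2 - b/4) + m) := by
  have hm : (0:ℝ) ≤ m := m.cast_nonneg
  have hxa : (0:ℝ) < (2 - a/2) + m := by linarith
  have hya : (0:ℝ) < (2 - a/4) + m := by linarith
  have hxb : (0:ℝ) < (2 - b/2) + m := by linarith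
  have hyb : (0:ℝ) < (2 - b/4) + m := by linarith
  rw [one_div_sub_one_div hxa hya, one_div_sub_one_div hxb hyb]
  rw [show (2 - a/4) + m - ((2 - a/2) + m) = a/4 by ring,
    show (2 - b/4) + m - ((2 - b/2) + m) = b/4 by ring]
  have h1 : (a/4) / (((2 - a/2) + m) * ((2 - a/4) + m))
      ≤ (a/4) / (((2 - b/2) + m) * ((2 - b/4) + m)) := by
    apply div_le_div_of_nonneg_left (by positivity) (by positivity) (by nlinarith)
  have h2 : (a/4) / (((2 - b/2) + m) * ((2 - b/4) + m))
      < (b/4) / (((2 - b/2) + m) * ((2 - b/4) + m)) := by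
    apply (div_lt_div_iff_of_pos_right (by positivity)).2
    linarith
  linarith

lemma H_mono {a b : ℝ} (ha : 0 < a) (hb : b < 4) (hab : a < b) :
    digamma (2 - a/4) - digamma (2 - a/2) < digamma (2 - b/4) - digamma (2 - b/2) := by
  have hxa : (0:ℝ) < 2 - a/2 := by linarith
  have hya : (0:ℝ) < 2 - a/4 := by linarith
  have hxb : (0:ℝ) < 2 - b/2 := by linarith
  have hyb : (0:ℝ) < 2 - b/4 := by linarith
  have hta := digamma_diff_tendsto hxa hya
  have htb := digamma_diff_tendsto hxb hyb
  set δ := (1 / ((2 - b/2) + (0:ℕ)) - 1 / ((2 - b/4) + (0:ℕ)))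
    - (1 / ((2 - a/2) + (0:ℕ)) - 1 / ((2 - a/4) + (0:ℕ))) with hδ
  have hδpos : 0 < δ := by
    have := term_le 0 ha hb hab
    simp only [hδ]
    linarith
  clear_value δ
  have key : digamma (2 - a/4) - digamma (2 - a/2) + δ
      ≤ digamma (2 - b/4) - digamma (2 - b/2) := by
    refine le_of_tendsto_of_tendsto (hta.add_const δ) htb ?_
    filter_upwards [eventually_ge_atTop 1] with N hN
    have h0 : (0:ℕ) ∈ Finset.range N := Finset.mem_range.2 hN
    have hsum : δ ≤ ∑ m ∈ Finset.range N, ((1 / ((2 - b/2) + m) - 1 / ((2 - b/4) + m))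
        - (1 / ((2 - a/2) + m) - 1 / ((2 - a/4) + m))) := by
      rw [hδ]
      refine Finset.single_le_sum (f := fun m : ℕ => (1 / ((2 - b/2) + m) - 1 / ((2 - b/4) + m))
        - (1 / ((2 - a/2) + m) - 1 / ((2 - a/4) + m))) (fun m _ => ?_) h0
      have := term_le m ha hb hab
      linarith
    rw [Finset.sum_sub_distrib] at hsum
    linarith
  linarith

lemma Aconst_pos {μ : ℝ} (h : μ < 4) : 0 < Aconst μ := by
  have h2 : (0:ℝ) < 2 - μ/2 := by linarith
  have h4 : (0:ℝ) < 2 - μ/4 := by linarith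
  have := Real.Gamma_pos_of_pos h2
  have := Real.Gamma_pos_of_pos h4
  have := Real.pi_pos
  have : (0:ℝ) < (2:ℝ) ^ (2 - μ/2) := Real.rpow_pos_of_pos two_pos _
  unfold Aconst
  positivity

lemma Aconst_hasDerivAt {μ : ℝ} (h0 : 0 < μ) (h4 : μ < 4) :
    HasDerivAt Aconst
      (Aconst μ * ((digamma (2 - μ/4) - digamma (2 - μ/2) - Real.log 2) / 2)) μ := by
  have h2 : (0:ℝ) < 2 - μ/2 := by linarith
  have hq : (0:ℝ) < 2 - μ/4 := by linarith
  have hGq : Real.Gamma (2 - μ/4) ≠ 0 := (Real.Gamma_pos_of_pos hq).ne'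
  have hf : HasDerivAt (fun t : ℝ => 2 - t/2) (-(1/2)) μ := by
    simpa using ((hasDerivAt_id μ).div_const 2).const_sub 2
  have hg : HasDerivAt (fun t : ℝ => 2 - t/4) (-(1/4)) μ := by
    simpa using ((hasDerivAt_id μ).div_const 4).const_sub 2
  have hT : HasDerivAt (fun t : ℝ => (2:ℝ) ^ (2 - t/2))
      ((2:ℝ) ^ (2 - μ/2) * Real.log 2 * -(1/2)) μ :=
    ((Real.hasStrictDerivAt_const_rpow two_pos (2 - μ/2)).hasDerivAt).comp μ hf
  have hP : HasDerivAt (fun t : ℝ => Real.Gamma (2 - t/2))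
      (digamma (2 - μ/2) * Real.Gamma (2 - μ/2) * -(1/2)) μ :=
    by have := (Gamma_hasDerivAt h2).comp μ hf; exact this
  have hQ : HasDerivAt (fun t : ℝ => Real.Gamma (2 - t/4))
      (digamma (2 - μ/4) * Real.Gamma (2 - μ/4) * -(1/4)) μ :=
    by have := (Gamma_hasDerivAt hq).comp μ hg; exact this
  have hQ2 : HasDerivAt (fun t : ℝ => Real.Gamma (2 - t/4) ^ 2)
      (2 * Real.Gamma (2 - μ/4) ^ 1 * (digamma (2 - μ/4) * Real.Gamma (2 - μ/4) * -(1/4))) μ :=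
    hQ.pow 2
  have hN : HasDerivAt (fun t : ℝ => Real.pi ^ 2 * (2:ℝ) ^ (2 - t/2) * Real.Gamma (2 - t/2))
      (Real.pi ^ 2 * ((2:ℝ) ^ (2 - μ/2) * Real.log 2 * -(1/2)) * Real.Gamma (2 - μ/2)
        + Real.pi ^ 2 * (2:ℝ) ^ (2 - μ/2) * (digamma (2 - μ/2) * Real.Gamma (2 - μ/2) * -(1/2)))
      μ := by
    have := ((hT.const_mul (Real.pi ^ 2)).mul hP)
    exact this
  have hdiv := hN.div hQ2 (by positivity)
  have : Aconst = fun t : ℝ =>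
      Real.pi ^ 2 * (2:ℝ) ^ (2 - t/2) * Real.Gamma (2 - t/2) / Real.Gamma (2 - t/4) ^ 2 := rfl
  rw [this]
  refine hdiv.congr_deriv ?_
  symm
  beta_reduce
  rw [div_mul_eq_mul_div, div_eq_div_iff (by positivity) (by positivity)]
  ring

theorem stmt_19 (μ₀ : ℝ) (h0 : 0 < μ₀) (h4 : μ₀ < 4)
    (hψ : digamma (2 - μ₀ / 4) - digamma (2 - μ₀ / 2) = Real.log 2) :
    StrictAntiOn Aconst (Set.Ioo 0 μ₀) ∧ StrictMonoOn Aconst (Set.Ioo μ₀ 4) ∧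
    ∀ μ ∈ Set.Ioo (0 : ℝ) 4, Aconst μ₀ ≤ Aconst μ := by
  have hcont : ∀ x ∈ Set.Ioo (0:ℝ) 4, ContinuousAt Aconst x := fun x hx =>
    (Aconst_hasDerivAt hx.1 hx.2).continuousAt
  have hanti : StrictAntiOn Aconst (Set.Ioc 0 μ₀) := by
    apply strictAntiOn_of_deriv_neg (convex_Ioc 0 μ₀)
    · intro x hx
      exact (hcont x ⟨hx.1, lt_of_le_of_lt hx.2 h4⟩).continuousWithinAt
    · rw [interior_Ioc]
      intro x hx
      rw [(Aconst_hasDerivAt hx.1 (lt_trans hx.2 h4)).deriv]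
      have hH : digamma (2 - x/4) - digamma (2 - x/2) < Real.log 2 := by
        have := H_mono hx.1 h4 hx.2
        linarith
      exact mul_neg_of_pos_of_neg (Aconst_pos (by linarith [hx.2]))
        (by linarith)
  have hmono : StrictMonoOn Aconst (Set.Ico μ₀ 4) := by
    apply strictMonoOn_of_deriv_pos (convex_Ico μ₀ 4)
    · intro x hx
      exact (hcont x ⟨lt_of_lt_of_le h0 hx.1, hx.2⟩).continuousWithinAt
    · rw [interior_Ico]
      intro x hx
      rw [(Aconst_hasDerivAt (lt_trans h0 hx.1) hx.2).deriv]
      have hH : Real.log 2 < digamma (2 - x/4) - digamma (2 - x/2) := by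
        have := H_mono h0 hx.2 hx.1
        linarith
      exact mul_pos (Aconst_pos hx.2) (by linarith)
  refine ⟨hanti.mono Set.Ioo_subset_Ioc_self, hmono.mono Set.Ioo_subset_Ico_self, ?_⟩
  intro μ hμ
  rcases lt_trichotomy μ μ₀ with h | h | h
  · exact (hanti ⟨hμ.1, h.le⟩ ⟨h0, le_refl _⟩ h).le
  · rw [h]
  · exact (hmono ⟨le_refl _, h4⟩ ⟨h.le, hμ.2⟩ h).le
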